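/- There exist infinitely many pairwise non-isomorphic ℚ-algebras of the form ℚ[X,Y]/(X² + aY², XY) with a a nonzero rational; more precisely, there is an infinite set S of nonzero rationals such that for distinct a, b ∈ S the ℚ-algebras ℚ[X,Y]/(X² + aY², XY) and ℚ[X,Y]/(X² + bY², XY) are not isomorphic. -/

import Mathlib

open MvPolynomial

/-- `R a = ℚ[X,Y]/(X² + aY², XY)`. -/
noncomputable abbrev stmt4R (a : ℚ) :=
  MvPolynomial (Fin 2) ℚ ⧸
    Ideal.span ({X 0 ^ 2 + C a * X 1 ^ 2, X 0 * X 1} : Set (MvPolynomial (Fin 2) ℚ))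

/-!
For `b ≠ 0`, `R_b` has basis `1, x, y, y²` and `(αx + βy)² = (β² - bα²) y²`, so squaring
`m/m² → m²` on its maximal ideal is the binary quadratic form `β² - bα²`, of determinant `-b` up
to squares. An isomorphism `R_a ≃ R_b` sends `x, y` to `u, v` with `uv = 0`, `u² + av² = 0` and
`u² ≠ 0`: an orthogonal basis of this form whose values have ratio `-a`, so the determinant is
also `-a` up to squares and `ab` is a square. Distinct primes therefore give pairwise
non-isomorphic algebras.
-/

theorem isSquare_mul_of_orthogonal {K : Type*} [Field K] {a b α β α' β' : K}
    (horth : β * β' - b * α * α' = 0)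
    (hrel : β ^ 2 - b * α ^ 2 + a * (β' ^ 2 - b * α' ^ 2) = 0)
    (hne : β ^ 2 - b * α ^ 2 ≠ 0) : IsSquare (a * b) := by
  have hne' : β' ^ 2 - b * α' ^ 2 ≠ 0 := fun h => hne (by linear_combination hrel - a * h)
  -- `Q(w) Q(w') = (ββ' - bαα')² - b(αβ' - βα')²` for `Q(α, β) = β² - bα²`, and `Q(w) = -a Q(w')`
  refine ⟨b * (α * β' - β * α') / (β' ^ 2 - b * α' ^ 2), ?_⟩
  field_simp
  linear_combination b * (β' ^ 2 - b * α' ^ 2) * hrel - b * (β * β' - b * α * α') * horth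

theorem Nat.Prime.not_isSquare_mul {p q : ℕ} (hp : p.Prime) (hq : q.Prime) (hpq : p ≠ q) :
    ¬IsSquare (p * q) := by
  rintro ⟨k, hk⟩
  have hsf : Squarefree (p * q) :=
    Nat.squarefree_mul_iff.2 ⟨(Nat.coprime_primes hp hq).2 hpq, hp.squarefree, hq.squarefree⟩
  obtain rfl : k = 1 := Nat.isUnit_iff.1 (hsf k (hk ▸ dvd_rfl))
  exact hp.one_lt.ne' (Nat.eq_one_of_mul_eq_one_right hk)

namespace stmt4R

variable (b : ℚ)

noncomputable def x : stmt4R b := Ideal.Quotient.mk _ (X 0)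

noncomputable def y : stmt4R b := Ideal.Quotient.mk _ (X 1)

noncomputable def ofCoords (c α β γ : ℚ) : stmt4R b :=
  algebraMap ℚ _ c + algebraMap ℚ _ α * x b + algebraMap ℚ _ β * y b +
    algebraMap ℚ _ γ * y b ^ 2

theorem mk_C (c : ℚ) : Ideal.Quotient.mk _ (C c) = algebraMap ℚ (stmt4R b) c := rfl

theorem x_mul_y : x b * y b = 0 := by
  rw [x, y, ← map_mul, Ideal.Quotient.eq_zero_iff_mem]
  exact Ideal.subset_span (by simp)

theorem x_sq_add : x b ^ 2 + algebraMap ℚ _ b * y b ^ 2 = 0 := by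
  rw [x, y, ← mk_C, ← map_pow, ← map_pow, ← map_mul, ← map_add, Ideal.Quotient.eq_zero_iff_mem]
  exact Ideal.subset_span (by simp)

variable {b}

theorem y_pow_three (hb : b ≠ 0) : y b ^ 3 = 0 := by
  have h : algebraMap ℚ (stmt4R b) b * y b ^ 3 = 0 := by
    linear_combination y b * x_sq_add b - x b * x_mul_y b
  calc y b ^ 3 = algebraMap ℚ _ b⁻¹ * (algebraMap ℚ _ b * y b ^ 3) := by
        rw [← mul_assoc, ← map_mul, inv_mul_cancel₀ hb, map_one, one_mul]
    _ = 0 := by rw [h, mul_zero]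

theorem x_eq_ofCoords : x b = ofCoords b 0 1 0 0 := by simp [ofCoords]

theorem y_eq_ofCoords : y b = ofCoords b 0 0 1 0 := by simp [ofCoords]

theorem algebraMap_eq_ofCoords (c : ℚ) : algebraMap ℚ (stmt4R b) c = ofCoords b c 0 0 0 := by
  simp [ofCoords]

theorem ofCoords_add (c α β γ c' α' β' γ' : ℚ) :
    ofCoords b c α β γ + ofCoords b c' α' β' γ' =
      ofCoords b (c + c') (α + α') (β + β') (γ + γ') := by
  simp only [ofCoords, map_add]
  ring

theorem ofCoords_mul (hb : b ≠ 0) (c α β γ c' α' β' γ' : ℚ) :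
    ofCoords b c α β γ * ofCoords b c' α' β' γ' =
      ofCoords b (c * c') (c * α' + c' * α) (c * β' + c' * β)
        (c * γ' + c' * γ + β * β' - b * α * α') := by
  simp only [ofCoords, map_add, map_mul, map_sub]
  set ι := algebraMap ℚ (stmt4R b)
  linear_combination ι α * ι α' * x_sq_add b
    + (ι α * ι β' + ι β * ι α' + (ι α * ι γ' + ι γ * ι α') * y b) * x_mul_y b
    + (ι β * ι γ' + ι γ * ι β' + ι γ * ι γ' * y b) * y_pow_three hb

theorem exists_eq_ofCoords (hb : b ≠ 0) (z : stmt4R b) :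
    ∃ c α β γ, z = ofCoords b c α β γ := by
  obtain ⟨p, rfl⟩ := Ideal.Quotient.mk_surjective z
  induction p using MvPolynomial.induction_on with
  | C c => exact ⟨c, 0, 0, 0, by simp [ofCoords, mk_C]⟩
  | add p q hp hq =>
    obtain ⟨c, α, β, γ, hp⟩ := hp
    obtain ⟨c', α', β', γ', hq⟩ := hq
    exact ⟨_, _, _, _, by rw [map_add, hp, hq, ofCoords_add]⟩
  | mul_X p i hp =>
    obtain ⟨c, α, β, γ, hp⟩ := hp
    obtain ⟨α', β', hX⟩ : ∃ α' β', Ideal.Quotient.mk _ (X i) = ofCoords b 0 α' β' 0 := by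
      fin_cases i
      exacts [⟨1, 0, x_eq_ofCoords⟩, ⟨0, 1, y_eq_ofCoords⟩]
    exact ⟨_, _, _, _, by rw [map_mul, hp, hX, ofCoords_mul hb]⟩

theorem ofCoords_eq_mk (c α β γ : ℚ) :
    ofCoords b c α β γ = Ideal.Quotient.mk _ (C c + C α * X 0 + C β * X 1 + C γ * X 1 ^ 2) := by
  simp only [ofCoords, x, y, map_add, map_mul, map_pow, mk_C]

theorem ofCoords_eq_zero_iff {c α β γ : ℚ} :
    ofCoords b c α β γ = 0 ↔ c = 0 ∧ α = 0 ∧ β = 0 ∧ γ = 0 := by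
  refine ⟨fun h => ?_, by rintro ⟨rfl, rfl, rfl, rfl⟩; simp [ofCoords]⟩
  rw [ofCoords_eq_mk, Ideal.Quotient.eq_zero_iff_mem, Ideal.mem_span_pair] at h
  obtain ⟨f, g, hfg⟩ := h
  replace hfg : f * X 0 * X 0 + C b * f * X 1 * X 1 + g * X 0 * X 1
      = C c + C α * X 0 + C β * X 1 + C γ * X 1 ^ 2 := by linear_combination hfg
  have hsub : ∀ i : Fin 2, (Finsupp.single i 2 - Finsupp.single i 1 : Fin 2 →₀ ℕ)
      = Finsupp.single i 1 := fun i => by rw [← Finsupp.single_tsub]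
  have e0 := congrArg (coeff 0) hfg
  have e1 := congrArg (coeff (Finsupp.single 0 1)) hfg
  have e2 := congrArg (coeff (Finsupp.single 1 1)) hfg
  have e3 := congrArg (coeff (Finsupp.single 0 2)) hfg
  have e4 := congrArg (coeff (Finsupp.single 1 2)) hfg
  simp [coeff_mul_X', coeff_C_mul, coeff_C, X_pow_eq_monomial, coeff_monomial, hsub,
    Finsupp.single_eq_single_iff, eq_comm] at e0 e1 e2 e3 e4
  exact ⟨e0, e1, e2, by rw [e4, ← e3, mul_zero]⟩

theorem x_sq_ne_zero {a : ℚ} (ha : a ≠ 0) : x a ^ 2 ≠ 0 := by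
  simp [x_eq_ofCoords, sq, ofCoords_mul ha, ofCoords_eq_zero_iff, ha]

theorem isSquare_mul_of_mul_eq_zero {a : ℚ} (ha : a ≠ 0) (hb : b ≠ 0) {u v : stmt4R b}
    (huv : u * v = 0) (hrel : u ^ 2 + algebraMap ℚ _ a * v ^ 2 = 0) (hu : u ^ 2 ≠ 0) :
    IsSquare (a * b) := by
  obtain ⟨c, α, β, γ, rfl⟩ := exists_eq_ofCoords hb u
  obtain ⟨c', α', β', γ', rfl⟩ := exists_eq_ofCoords hb v
  simp only [sq, algebraMap_eq_ofCoords, ofCoords_mul hb, ofCoords_add,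
    ofCoords_eq_zero_iff] at huv hrel hu
  have hc : c = 0 := by
    rcases mul_eq_zero.1 huv.1 with h | h
    · exact h
    · simpa [h] using hrel.1
  have hc' : c' = 0 := by simpa [hc, ha] using hrel.1
  subst hc hc'
  have horth : β * β' - b * α * α' = 0 := by linear_combination huv.2.2.2
  have hsum : β ^ 2 - b * α ^ 2 + a * (β' ^ 2 - b * α' ^ 2) = 0 := by
    linear_combination hrel.2.2.2
  refine isSquare_mul_of_orthogonal horth hsum fun h => hu ?_
  simp only [ofCoords_eq_zero_iff]
  exact ⟨by ring, by ring, by ring, by linear_combination h⟩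

theorem isSquare_mul_of_algEquiv {a : ℚ} (ha : a ≠ 0) (hb : b ≠ 0)
    (e : stmt4R a ≃ₐ[ℚ] stmt4R b) : IsSquare (a * b) := by
  refine isSquare_mul_of_mul_eq_zero ha hb (u := e (x a)) (v := e (y a)) ?_ ?_ ?_
  · rw [← map_mul, x_mul_y, map_zero]
  · rw [← map_pow, ← map_pow, ← e.commutes a, ← map_mul, ← map_add, x_sq_add, map_zero]
  · rw [← map_pow, map_ne_zero_iff e e.injective]
    exact x_sq_ne_zero ha

end stmt4R

/-- There is an infinite set `S` of nonzero rationals such that for distinct `a, b ∈ S`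
the `ℚ`-algebras `ℚ[X,Y]/(X² + aY², XY)` and `ℚ[X,Y]/(X² + bY², XY)` are not isomorphic. -/
theorem stmt_4 :
    ∃ S : Set ℚ, S.Infinite ∧ (∀ a ∈ S, a ≠ 0) ∧
      ∀ a ∈ S, ∀ b ∈ S, a ≠ b → IsEmpty (stmt4R a ≃ₐ[ℚ] stmt4R b) := by
  refine ⟨Nat.cast '' {p | p.Prime}, Nat.infinite_setOfPred_prime.image Nat.cast_injective.injOn,
    ?_, ?_⟩
  · rintro _ ⟨p, hp, rfl⟩
    exact Nat.cast_ne_zero.2 hp.ne_zero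
  · rintro _ ⟨p, hp, rfl⟩ _ ⟨q, hq, rfl⟩ hpq
    refine ⟨fun e => hp.not_isSquare_mul hq (fun h => hpq (congrArg _ h)) ?_⟩
    have hsq := stmt4R.isSquare_mul_of_algEquiv (Nat.cast_ne_zero.2 hp.ne_zero)
      (Nat.cast_ne_zero.2 hq.ne_zero) e
    rwa [← Nat.cast_mul, Rat.isSquare_natCast_iff] at hsq
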